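/- For r ≥ 1 and an ab-word w of degree k−1, the Eulerian generating function identity holds: ∑_{n≥0} (−1)^n β(( a^{r−1} b )^n · w) · x^{rn+k}/(rn+k)! = ( ∑_{n≥0} β(a^{rn}·w) · x^{rn+k}/(rn+k)! ) / ( ∑_{n≥0} x^{rn}/(rn)! ), where β(u) counts permutations with descent word u (so β(a^{rn}·w) counts permutations of S_{rn+k} whose first rn positions are ascents and whose last k−1 descent positions follow w). -/

import Mathlib

/-- The descent word of a permutation of `Fin N` (`false` = letter `a` = ascent,
`true` = letter `b` = descent). -/
def descWord {N : ℕ} (σ : Equiv.Perm (Fin N)) : List Bool :=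
  List.ofFn fun i : Fin (N - 1) =>
    decide (σ ⟨i.1 + 1, by have := i.2; omega⟩ < σ ⟨i.1, by have := i.2; omega⟩)

/-- `β(w)`: the number of permutations of `S_{deg w + 1}` with descent word `w`. -/
noncomputable def desNum (w : List Bool) : ℕ :=
  Nat.card {σ : Equiv.Perm (Fin (w.length + 1)) // descWord σ = w}

/-- The ab-word `(a^{r−1} b)^n`. -/
def abPow (r n : ℕ) : List Bool :=
  (List.replicate n (List.replicate (r - 1) false ++ [true])).flatten

/-
Comparing coefficients of `x^{rn+k}/(rn+k)!`, the identity says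
`β(a^{rn} w) = ∑_{m ≤ n} (-1)^m C(rn + k, rm + k) β((a^{r-1}b)^m w)`, which follows by
induction on `n` from the splitting rule
`β(a^{p+1} v) + β(a^p b v) = C(p + |v| + 2, p + 1) β(v)`.
Both words on the left describe the permutations whose first `p + 1` entries increase and whose
last `|v| + 1` entries have descent word `v`, the letter between the two blocks being free; such a
permutation is determined by the set of its first `p + 1` values and the relative order of the
remaining ones.
-/

section DescentWord

variable {α β : Type*} [LinearOrder α] [LinearOrder β]

def descentWord {N : ℕ} (f : Fin N → α) : List Bool :=
  List.ofFn fun i : Fin (N - 1) =>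
    decide (f ⟨i.1 + 1, by have := i.2; omega⟩ < f ⟨i.1, by have := i.2; omega⟩)

theorem descWord_eq_descentWord {N : ℕ} (σ : Equiv.Perm (Fin N)) :
    descWord σ = descentWord σ := rfl

@[simp]
theorem length_descentWord {N : ℕ} (f : Fin N → α) : (descentWord f).length = N - 1 := by
  simp [descentWord]

theorem descentWord_comp_of_strictMono {N : ℕ} {g : α → β} (hg : StrictMono g)
    (f : Fin N → α) :
    descentWord (g ∘ f) = descentWord f := by
  simp [descentWord, hg.lt_iff_lt]

theorem descentWord_eq_replicate_iff {m : ℕ} (f : Fin (m + 1) → α) :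
    descentWord f = List.replicate m false ↔ Monotone f := by
  rw [Fin.monotone_iff_le_succ, List.eq_replicate_iff]
  simp [descentWord, List.mem_ofFn, Fin.succ, Fin.castSucc, Fin.castAdd, Fin.castLE]

theorem descentWord_append {m n : ℕ} (f : Fin (m + 1) → α) (g : Fin (n + 1) → α) :
    descentWord (Fin.append f g) =
      descentWord f ++ decide (g 0 < f (Fin.last m)) :: descentWord g := by
  apply List.ext_getElem (by simp; omega)
  intro i h₁ h₂
  simp only [descentWord, Fin.append, Fin.addCases, Fin.castLT, Fin.subNat, eq_rec_constant,
    List.getElem_ofFn, List.getElem_append, List.length_ofFn, List.getElem_cons]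
  split_ifs <;> first | rfl | omega | (congr 3 <;> ext <;> simp <;> omega)

end DescentWord

section Shuffle

variable {m n : ℕ}

theorem card_compl_eq_of_card_eq {S : Finset (Fin (m + n))} (hS : S.card = m) :
    Sᶜ.card = n := by
  rw [Finset.card_compl, Fintype.card_fin, hS, Nat.add_sub_cancel_left]

theorem bijective_append_orderEmbOfFin (S : {S : Finset (Fin (m + n)) // S.card = m})
    (τ : Equiv.Perm (Fin n)) :
    Function.Bijective (Fin.append (S.1.orderEmbOfFin S.2)
      (S.1ᶜ.orderEmbOfFin (card_compl_eq_of_card_eq S.2) ∘ τ)) := by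
  refine Finite.injective_iff_bijective.mp (Fin.append_injective_iff.mpr
    ⟨(S.1.orderEmbOfFin S.2).injective,
      (S.1ᶜ.orderEmbOfFin _).injective.comp τ.injective, fun i j h => ?_⟩)
  have hS := Finset.orderEmbOfFin_mem S.1 S.2 i
  have hSc := Finset.orderEmbOfFin_mem S.1ᶜ (card_compl_eq_of_card_eq S.2) (τ j)
  rw [h] at hS
  exact Finset.mem_compl.mp hSc hS

noncomputable def shuffle (S : {S : Finset (Fin (m + n)) // S.card = m})
    (τ : Equiv.Perm (Fin n)) : Equiv.Perm (Fin (m + n)) :=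
  Equiv.ofBijective _ (bijective_append_orderEmbOfFin S τ)

theorem shuffle_castAdd (S : {S : Finset (Fin (m + n)) // S.card = m})
    (τ : Equiv.Perm (Fin n)) (i : Fin m) :
    shuffle S τ (Fin.castAdd n i) = S.1.orderEmbOfFin S.2 i :=
  Fin.append_left _ _ i

theorem shuffle_natAdd (S : {S : Finset (Fin (m + n)) // S.card = m})
    (τ : Equiv.Perm (Fin n)) (j : Fin n) :
    shuffle S τ (Fin.natAdd m j) = S.1ᶜ.orderEmbOfFin (card_compl_eq_of_card_eq S.2) (τ j) :=
  Fin.append_right _ _ j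

theorem shuffle_inj {S S' : {S : Finset (Fin (m + n)) // S.card = m}}
    {τ τ' : Equiv.Perm (Fin n)} : shuffle S τ = shuffle S' τ' ↔ S = S' ∧ τ = τ' := by
  refine ⟨fun h => ?_, fun h => h.1 ▸ h.2 ▸ rfl⟩
  have hS : S = S' := by
    ext1
    have h' : Set.range (shuffle S τ ∘ Fin.castAdd n) =
        Set.range (shuffle S' τ' ∘ Fin.castAdd n) := by
      rw [h]
    simpa [Function.comp_def, shuffle_castAdd, Finset.range_orderEmbOfFin] using h'
  subst hS
  refine ⟨rfl, Equiv.ext fun j => ?_⟩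
  simpa [shuffle_natAdd] using congrArg (· (Fin.natAdd m j)) h

theorem exists_shuffle_eq (σ : Equiv.Perm (Fin (m + n)))
    (hσ : StrictMono (σ ∘ Fin.castAdd n)) :
    ∃ S τ, shuffle S τ = σ := by
  set S : Finset (Fin (m + n)) := Finset.univ.map ⟨σ ∘ Fin.castAdd n, hσ.injective⟩
  have hS : S.card = m := by simp [S]
  have hmem : ∀ j, σ (Fin.natAdd m j) ∈ Sᶜ := by
    intro j
    simp only [S, Finset.mem_compl, Finset.mem_map, Finset.mem_univ, true_and,
      Function.Embedding.coeFn_mk, Function.comp_apply, σ.injective.eq_iff, not_exists]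
    exact fun i => Fin.ne_of_val_ne (by simp; omega)
  let e := Sᶜ.orderIsoOfFin (card_compl_eq_of_card_eq hS)
  let t : Fin n → Fin n := fun j => e.symm ⟨σ (Fin.natAdd m j), hmem j⟩
  have ht : t.Injective := fun a b hab => by
    simpa using σ.injective (congrArg Subtype.val (e.symm.injective hab))
  refine ⟨⟨S, hS⟩, Equiv.ofBijective t (Finite.injective_iff_bijective.mp ht),
    Equiv.ext fun i => ?_⟩
  induction i using Fin.addCases with
  | left i =>
    rw [shuffle_castAdd]
    refine congrFun (Finset.orderEmbOfFin_unique hS (fun i => ?_) hσ).symm i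
    simp [S]
  | right j =>
    rw [shuffle_natAdd, ← Finset.coe_orderIsoOfFin_apply]
    simp [t, e]

theorem strictMono_shuffle_comp_castAdd (S : {S : Finset (Fin (m + n)) // S.card = m})
    (τ : Equiv.Perm (Fin n)) : StrictMono (shuffle S τ ∘ Fin.castAdd n) := by
  simpa [Function.comp_def, shuffle_castAdd] using (S.1.orderEmbOfFin S.2).strictMono

theorem descentWord_shuffle_comp_natAdd (S : {S : Finset (Fin (m + n)) // S.card = m})
    (τ : Equiv.Perm (Fin n)) : descentWord (shuffle S τ ∘ Fin.natAdd m) = descWord τ := by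
  have h : shuffle S τ ∘ Fin.natAdd m =
      S.1ᶜ.orderEmbOfFin (card_compl_eq_of_card_eq S.2) ∘ τ :=
    funext (shuffle_natAdd S τ)
  rw [h, descentWord_comp_of_strictMono (OrderEmbedding.strictMono _), descWord_eq_descentWord]

theorem card_strictMono_head_descentWord_tail (v : List Bool) :
    Nat.card {σ : Equiv.Perm (Fin (m + n)) //
        StrictMono (σ ∘ Fin.castAdd n) ∧ descentWord (σ ∘ Fin.natAdd m) = v} =
      (m + n).choose m * Nat.card {τ : Equiv.Perm (Fin n) // descWord τ = v} := by
  let Φ : {S : Finset (Fin (m + n)) // S.card = m} ×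
      {τ : Equiv.Perm (Fin n) // descWord τ = v} →
      {σ : Equiv.Perm (Fin (m + n)) //
        StrictMono (σ ∘ Fin.castAdd n) ∧ descentWord (σ ∘ Fin.natAdd m) = v} := fun x =>
    ⟨shuffle x.1 x.2.1, strictMono_shuffle_comp_castAdd _ _,
      (descentWord_shuffle_comp_natAdd _ _).trans x.2.2⟩
  have hΦ : Function.Bijective Φ := by
    refine ⟨fun x y h => ?_, fun ⟨σ, hσ, hv⟩ => ?_⟩
    · obtain ⟨hS, hτ⟩ := shuffle_inj.mp (congrArg Subtype.val h)
      exact Prod.ext hS (Subtype.ext hτ)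
    · obtain ⟨S, τ, rfl⟩ := exists_shuffle_eq σ hσ
      exact ⟨⟨S, τ, (descentWord_shuffle_comp_natAdd S τ).symm.trans hv⟩, rfl⟩
  rw [← Nat.card_congr (Equiv.ofBijective Φ hΦ), Nat.card_prod, Nat.card_eq_fintype_card,
    Fintype.card_finset_len, Fintype.card_fin]

end Shuffle

theorem desNum_eq_card {w : List Bool} {M : ℕ} (h : w.length + 1 = M) :
    desNum w = Nat.card {σ : Equiv.Perm (Fin M) // descWord σ = w} := by
  subst h; rfl

theorem exists_descWord_eq_replicate_append_cons_iff (p : ℕ) (v : List Bool)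
    (σ : Equiv.Perm (Fin (p + 1 + (v.length + 1)))) :
    (∃ x, descWord σ = List.replicate p false ++ x :: v) ↔
      StrictMono (σ ∘ Fin.castAdd (v.length + 1)) ∧
        descentWord (σ ∘ Fin.natAdd (p + 1)) = v := by
  have hsplit : descWord σ = descentWord (σ ∘ Fin.castAdd (v.length + 1)) ++
      decide (σ (Fin.natAdd (p + 1) 0) < σ (Fin.castAdd (v.length + 1) (Fin.last p))) ::
        descentWord (σ ∘ Fin.natAdd (p + 1)) :=
    (congrArg descentWord Fin.append_castAdd_natAdd).symm.trans (descentWord_append _ _)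
  have hmono : Monotone (σ ∘ Fin.castAdd (v.length + 1)) ↔
      StrictMono (σ ∘ Fin.castAdd (v.length + 1)) :=
    ⟨fun h => h.strictMono_of_injective (σ.injective.comp (Fin.castAdd_injective _ _)),
      StrictMono.monotone⟩
  rw [hsplit, ← hmono, ← descentWord_eq_replicate_iff]
  constructor
  · rintro ⟨x, hx⟩
    obtain ⟨hhead, htail⟩ := List.append_inj hx (by simp)
    exact ⟨hhead, (List.cons_eq_cons.mp htail).2⟩
  · rintro ⟨hhead, htail⟩
    exact ⟨_, by rw [hhead, htail]⟩

theorem desNum_replicate_append_add_desNum (p : ℕ) (v : List Bool) :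
    desNum (List.replicate (p + 1) false ++ v) + desNum (List.replicate p false ++ true :: v) =
      (p + v.length + 2).choose (p + 1) * desNum v := by
  rw [List.replicate_succ', List.append_assoc, List.singleton_append,
    desNum_eq_card (M := p + 1 + (v.length + 1)) (by simp; omega),
    desNum_eq_card (M := p + 1 + (v.length + 1)) (by simp; omega),
    Nat.card_eq_fintype_card, Nat.card_eq_fintype_card, ← Fintype.card_subtype_or_disjoint,
    ← Nat.card_eq_fintype_card]
  · rw [Nat.card_congr (Equiv.subtypeEquivRight fun σ =>
        (Bool.exists_bool (p := fun x => descWord σ = List.replicate p false ++ x :: v)).symm.trans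
          (exists_descWord_eq_replicate_append_cons_iff p v σ)),
      card_strictMono_head_descentWord_tail,
      show p + 1 + (v.length + 1) = p + v.length + 2 by omega]
    rfl
  · intro P hfalse htrue σ hσ
    simpa using (hfalse σ hσ).symm.trans (htrue σ hσ)

@[simp]
theorem abPow_zero (r : ℕ) : abPow r 0 = [] := rfl

theorem abPow_succ_append (r m : ℕ) (w : List Bool) :
    abPow r (m + 1) ++ w = abPow r m ++ (List.replicate (r - 1) false ++ true :: w) := by
  simp [abPow, List.replicate_succ']

theorem desNum_replicate_append_eq_sum {r : ℕ} (hr : 1 ≤ r) (n : ℕ) (w : List Bool) :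
    (desNum (List.replicate (r * n) false ++ w) : ℤ) =
      ∑ m ∈ Finset.range (n + 1), (-1 : ℤ) ^ m *
        (w.length + 1 + r * n).choose (w.length + 1 + r * m) * desNum (abPow r m ++ w) := by
  induction n generalizing w with
  | zero => simp
  | succ n ih =>
    set w' := List.replicate (r - 1) false ++ true :: w
    have hlen : w'.length = w.length + r := by
      simp only [w', List.length_append, List.length_replicate, List.length_cons]; omega
    have hw' : w'.length + 1 + r * n = w.length + 1 + r * (n + 1) := by
      rw [hlen, Nat.mul_succ]; omega
    have hsplit : (desNum (List.replicate (r * (n + 1)) false ++ w) : ℤ) =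
        (w.length + 1 + r * (n + 1)).choose (w.length + 1) * desNum w -
          desNum (List.replicate (r * n) false ++ w') := by
      have h := desNum_replicate_append_add_desNum (r * n + (r - 1)) w
      rw [show r * n + (r - 1) + w.length + 2 = r * (n + 1) + (w.length + 1) by
          rw [Nat.mul_succ]; omega,
        show r * n + (r - 1) + 1 = r * (n + 1) by rw [Nat.mul_succ]; omega,
        Nat.choose_symm_add, Nat.add_comm (r * (n + 1)), List.replicate_add, List.append_assoc] at h
      have h' := congrArg (Nat.cast (R := ℤ)) h
      push_cast at h'
      linarith
    rw [hsplit, ih w', Finset.sum_range_succ' _ (n + 1), hw', sub_eq_add_neg,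
      ← Finset.sum_neg_distrib, add_comm]
    congr 1
    · refine Finset.sum_congr rfl fun m _ => ?_
      rw [abPow_succ_append, pow_succ, show w'.length + 1 + r * m = w.length + 1 + r * (m + 1) by
        rw [hlen, Nat.mul_succ]; omega]
      ring
    · simp

section Expand

open PowerSeries

variable {R : Type*} [CommRing R] {r : ℕ}

theorem mk_ite_dvd_eq_expand (hr : r ≠ 0) (f : ℕ → R) :
    (mk fun N => if r ∣ N then f N else 0) = expand r hr (mk fun n => f (r * n)) := by
  ext N
  rw [coeff_mk, coeff_expand, coeff_mk]
  split_ifs with h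
  · rw [Nat.mul_div_cancel' h]
  · rfl

theorem mk_ite_le_dvd_sub_eq_X_pow_mul_expand (hr : r ≠ 0) (k : ℕ) (f : ℕ → R) :
    (mk fun N => if k ≤ N ∧ r ∣ N - k then f N else 0) =
      X ^ k * expand r hr (mk fun n => f (k + r * n)) := by
  ext N
  rw [coeff_mk, coeff_X_pow_mul', coeff_expand, coeff_mk]
  by_cases hk : k ≤ N
  · simp only [hk, true_and, if_true]
    split_ifs with h
    · rw [Nat.mul_div_cancel' h, Nat.add_sub_cancel' hk]
    · rfl
  · simp [hk]

end Expand

open PowerSeries in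
theorem mk_desNum_abPow_mul_mk_inv_factorial {r : ℕ} (hr : 1 ≤ r) (w : List Bool) :
    (mk fun n => (-1 : ℚ) ^ n * desNum (abPow r n ++ w) / Nat.factorial (w.length + 1 + r * n)) *
        (mk fun n => (1 : ℚ) / Nat.factorial (r * n)) =
      mk fun n => (desNum (List.replicate (r * n) false ++ w) : ℚ) /
        Nat.factorial (w.length + 1 + r * n) := by
  ext n
  have hsum := congrArg (Int.cast (R := ℚ)) (desNum_replicate_append_eq_sum hr n w)
  push_cast at hsum
  rw [coeff_mul, Finset.Nat.sum_antidiagonal_eq_sum_range_succ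
    (fun i j => coeff i (mk _) * coeff j (mk _)), coeff_mk, hsum, Finset.sum_div]
  refine Finset.sum_congr rfl fun i hi => ?_
  have hi : i ≤ n := Nat.lt_succ_iff.mp (Finset.mem_range.mp hi)
  rw [coeff_mk, coeff_mk, Nat.cast_choose ℚ (by gcongr),
    show w.length + 1 + r * n - (w.length + 1 + r * i) = r * (n - i) by rw [Nat.mul_sub]; omega]
  field_simp

/-- For `r ≥ 1` and an ab-word `w` of degree `k−1`,
`∑ₙ (−1)ⁿ β((a^{r−1}b)ⁿ·w) x^{rn+k}/(rn+k)!
  = (∑ₙ β(a^{rn}·w) x^{rn+k}/(rn+k)!) / (∑ₙ x^{rn}/(rn)!)`,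
stated with the denominator multiplied across. -/
theorem stmt_9 (r : ℕ) (hr : 1 ≤ r) (w : List Bool) :
    (PowerSeries.mk fun N =>
        if w.length + 1 ≤ N ∧ r ∣ N - (w.length + 1) then
          (-1 : ℚ) ^ ((N - (w.length + 1)) / r) *
            desNum (abPow r ((N - (w.length + 1)) / r) ++ w) / Nat.factorial N
        else 0) *
      (PowerSeries.mk fun N => if r ∣ N then (1 : ℚ) / Nat.factorial N else 0) =
    PowerSeries.mk fun N =>
      if w.length + 1 ≤ N ∧ r ∣ N - (w.length + 1) then
        (desNum (List.replicate (r * ((N - (w.length + 1)) / r)) false ++ w) : ℚ) /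
          Nat.factorial N
      else 0 := by
  have hr₀ : r ≠ 0 := by omega
  simp only [mk_ite_le_dvd_sub_eq_X_pow_mul_expand hr₀, mk_ite_dvd_eq_expand hr₀,
    Nat.add_sub_cancel_left, Nat.mul_div_cancel_left _ (Nat.pos_of_ne_zero hr₀)]
  rw [mul_assoc, ← map_mul, mk_desNum_abPow_mul_mk_inv_factorial hr]
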